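/- arXiv:1110.6036 — 4 statements merged into one kernel-verified Lean document; each statement's English description precedes it below -/
import Mathlib

section
/- A configuration σ is a local minimum of H with respect to the alternate-dynamics neighborhood structure (where neighbors are configurations differing on a subset of one sublattice) if and only if σ is a local minimum with respect to the single-spin-flip neighborhood structure (where neighbors differ at exactly one site). -/
open Finset

abbrev Site (L M : ℕ) := ZMod (2*L) × ZMod (2*M)

abbrev Config (L M : ℕ) := Site L M → Bool

def spin (b : Bool) : ℤ := if b then 1 else -1

def flipC {L M : ℕ} (σ : Config L M) (I : Finset (Site L M)) : Config L M :=
  fun x => if x ∈ I then !(σ x) else σ x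

noncomputable def ham {L M : ℕ} [NeZero L] [NeZero M] (J h : ℝ) (σ : Config L M) : ℝ :=
  -(J/2) * ∑ x : Site L M,
      ((spin (σ x) * spin (σ (x + (1,0))) + spin (σ x) * spin (σ (x + (0,1))) : ℤ) : ℝ)
    - (h/2) * ∑ x : Site L M, ((spin (σ x) : ℤ) : ℝ)

def evens (L M : ℕ) [NeZero L] [NeZero M] : Finset (Site L M) :=
  univ.filter fun x => Even (x.1.val + x.2.val)

def odds (L M : ℕ) [NeZero L] [NeZero M] : Finset (Site L M) :=
  univ.filter fun x => ¬ Even (x.1.val + x.2.val)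

def adj {L M : ℕ} (x y : Site L M) : Prop :=
  y = x + (1,0) ∨ x = y + (1,0) ∨ y = x + (0,1) ∨ x = y + (0,1)
/-- Neighbor for the alternate dynamics: configurations differing on a nonempty subset
of one sublattice. -/
def altNbr {L M : ℕ} [NeZero L] [NeZero M] (σ η : Config L M) : Prop :=
  ∃ I : Finset (Site L M), I.Nonempty ∧ (I ⊆ evens L M ∨ I ⊆ odds L M) ∧ η = flipC σ I

/-!
A subset `I` of one sublattice contains no two neighbouring sites, so every bond of the
Hamiltonian sees at most one flipped spin. Hence the energy change of the flip `σ ↦ σ^I` is the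
sum of the energy changes of the single flips `σ ↦ σ^{x}`, `x ∈ I`, and it is nonnegative as
soon as each of these is.
-/

section

variable {L M : ℕ}

def flipAdditive (I : Finset (Site L M)) : Submodule ℝ (Config L M → ℝ) where
  carrier := {F | ∀ σ, F (flipC σ I) - F σ = ∑ x ∈ I, (F (flipC σ {x}) - F σ)}
  zero_mem' := by simp
  add_mem' := by
    intro F G hF hG σ
    simp only [Set.mem_ofPred_eq, Pi.add_apply] at *
    rw [← sub_add_sub_comm, hF, hG, ← sum_add_distrib]
    exact sum_congr rfl fun _ _ => by ring
  smul_mem' := by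
    intro c F hF σ
    simp only [Set.mem_ofPred_eq, Pi.smul_apply, smul_eq_mul] at *
    rw [← mul_sub, hF, mul_sum]
    exact sum_congr rfl fun _ _ => by ring

lemma flipC_apply_of_notMem {σ : Config L M} {I : Finset (Site L M)} {z : Site L M}
    (hz : z ∉ I) : flipC σ I z = σ z := by
  simp [flipC, hz]

lemma mem_flipAdditive_of_support {I S : Finset (Site L M)} {F : Config L M → ℝ}
    (hF : ∀ σ τ : Config L M, (∀ z ∈ S, σ z = τ z) → F σ = F τ)
    (hIS : ∀ u ∈ I, ∀ v ∈ I, u ∈ S → v ∈ S → u = v) : F ∈ flipAdditive I := by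
  intro σ
  by_cases hmeet : ∃ u ∈ I, u ∈ S
  · obtain ⟨u, huI, huS⟩ := hmeet
    have hflip : F (flipC σ I) = F (flipC σ {u}) := hF _ _ fun z hz => by
      by_cases hzI : z ∈ I
      · obtain rfl := hIS z hzI u huI hz huS
        simp [flipC, hzI]
      · have : z ≠ u := fun h => hzI (h ▸ huI)
        simp [flipC, hzI, this]
    rw [hflip, sum_eq_single_of_mem u huI]
    intro x hxI hxu
    rw [hF _ σ fun z hz => flipC_apply_of_notMem fun h =>
      hxu (hIS x hxI u huI (by rwa [← mem_singleton.1 h]) huS), sub_self]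
  · push Not at hmeet
    have hσ : ∀ J ⊆ I, F (flipC σ J) = F σ := fun J hJ =>
      hF _ _ fun z hz => flipC_apply_of_notMem fun hzJ => hmeet z (hJ hzJ) hz
    rw [hσ I subset_rfl, sub_self]
    exact (sum_eq_zero fun x hx => by rw [hσ {x} (singleton_subset_iff.2 hx), sub_self]).symm

def bondEnergy (u v : Site L M) (σ : Config L M) : ℝ := spin (σ u) * spin (σ v)

def siteEnergy (u : Site L M) (σ : Config L M) : ℝ := spin (σ u)

lemma bondEnergy_mem_flipAdditive {I : Finset (Site L M)} {u v : Site L M}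
    (huv : ¬(u ∈ I ∧ v ∈ I)) : bondEnergy u v ∈ flipAdditive I := by
  refine mem_flipAdditive_of_support (S := {u, v}) (fun σ τ hστ => ?_) ?_
  · simp [bondEnergy, hστ u (by simp), hστ v (by simp)]
  · simp only [mem_insert, mem_singleton]
    rintro a ha b hb (rfl | rfl) (rfl | rfl) <;> tauto

lemma siteEnergy_mem_flipAdditive (I : Finset (Site L M)) (u : Site L M) :
    siteEnergy u ∈ flipAdditive I :=
  mem_flipAdditive_of_support (S := {u})
    (fun σ τ hστ => by simp [siteEnergy, hστ u (by simp)]) (by simp_all)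

variable [NeZero L] [NeZero M]

lemma ham_eq_sum (J h : ℝ) :
    ham J h = ∑ y : Site L M, (-(J / 2) • bondEnergy y (y + (1, 0)) +
      -(J / 2) • bondEnergy y (y + (0, 1)) + -(h / 2) • siteEnergy y) := by
  funext σ
  simp only [ham, Finset.sum_apply, Pi.add_apply, Pi.smul_apply, smul_eq_mul, mul_sum,
    ← sum_sub_distrib]
  exact sum_congr rfl fun _ _ => by simp only [bondEnergy, siteEnergy]; push_cast; ring

lemma even_val_add_one_iff {N : ℕ} [NeZero N] (a : ZMod (2 * N)) :
    Even (a + 1).val ↔ ¬Even a.val := by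
  have : Fact (1 < 2 * N) := ⟨by have := NeZero.pos N; omega⟩
  rw [ZMod.val_add, ZMod.val_one, Nat.even_iff, Nat.even_iff, Nat.mod_mod_of_dvd _ ⟨N, rfl⟩]
  omega

lemma even_coord_sum_add_unit_iff {y e : Site L M} (he : e = (1, 0) ∨ e = (0, 1)) :
    Even ((y + e).1.val + (y + e).2.val) ↔ ¬Even (y.1.val + y.2.val) := by
  rcases he with rfl | rfl <;>
  · simp only [Prod.fst_add, Prod.snd_add, add_zero, Nat.even_add, even_val_add_one_iff]
    tauto

lemma not_mem_both_of_parity_ne {I : Finset (Site L M)} (hI : I ⊆ evens L M ∨ I ⊆ odds L M)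
    {y e : Site L M} (he : Even ((y + e).1.val + (y + e).2.val) ↔ ¬Even (y.1.val + y.2.val)) :
    ¬(y ∈ I ∧ y + e ∈ I) := by
  rintro ⟨hy, hye⟩
  rcases hI with hI | hI <;>
  · have := (mem_filter.1 (hI hy)).2
    have := (mem_filter.1 (hI hye)).2
    tauto

lemma ham_mem_flipAdditive (J h : ℝ) {I : Finset (Site L M)}
    (hI : I ⊆ evens L M ∨ I ⊆ odds L M) : ham J h ∈ flipAdditive I := by
  rw [ham_eq_sum]
  refine Submodule.sum_mem _ fun y _ => ?_
  have hbond : ∀ e : Site L M, e = (1, 0) ∨ e = (0, 1) →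
      bondEnergy y (y + e) ∈ flipAdditive I := fun _ he =>
    bondEnergy_mem_flipAdditive (not_mem_both_of_parity_ne hI (even_coord_sum_add_unit_iff he))
  exact add_mem (add_mem (Submodule.smul_mem _ _ (hbond _ (.inl rfl)))
    (Submodule.smul_mem _ _ (hbond _ (.inr rfl))))
    (Submodule.smul_mem _ _ (siteEnergy_mem_flipAdditive I y))

lemma singleton_subset_evens_or_odds (x : Site L M) :
    {x} ⊆ evens L M ∨ {x} ⊆ odds L M := by
  simp only [singleton_subset_iff, evens, odds, mem_filter, mem_univ, true_and]
  exact em _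

end

theorem alt_local_min_iff_single_flip_local_min_general {L M : ℕ} [NeZero L] [NeZero M]
    (J h : ℝ) (σ : Config L M) :
    (∀ η : Config L M, altNbr σ η → ham J h σ ≤ ham J h η) ↔
      (∀ x : Site L M, ham J h σ ≤ ham J h (flipC σ {x})) := by
  constructor
  · exact fun H x => H _ ⟨{x}, singleton_nonempty x, singleton_subset_evens_or_odds x, rfl⟩
  rintro H η ⟨I, -, hI, rfl⟩
  have hsum := ham_mem_flipAdditive J h hI σ
  have : 0 ≤ ∑ x ∈ I, (ham J h (flipC σ {x}) - ham J h σ) :=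
    sum_nonneg fun x _ => sub_nonneg.2 (H x)
  linarith

/-- local minima for the alternate dynamics coincide with local minima
for the single-spin-flip dynamics. -/
theorem alt_local_min_iff_single_flip_local_min {L M : ℕ} [NeZero L] [NeZero M]
    (J h : ℝ) (hJ : 0 < J) (hh : 0 < h) (σ : Config L M) :
    (∀ η : Config L M, altNbr σ η → ham J h σ ≤ ham J h η) ↔
      (∀ x : Site L M, ham J h σ ≤ ham J h (flipC σ {x})) :=
  alt_local_min_iff_single_flip_local_min_general J h σ
end

section
/- There exist a configuration σ and a set I = {x₁,...,x_n} of pairwise non-adjacent sites such that H(σ^I) ≤ H(σ) while H(σ^{x_i}) − H(σ) > 0 for some i. (Concretely: a parallel move can lower the energy even though one of its component single-spin flips raises it.) -/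
/-!
Let σ have a single `+` spin at `b = (1,1)` in a sea of `-` spins and let `I = {0, b}`, both sites
on the even sublattice. Flipping `I` moves the `+` spin from `b` to `0`, and the result is a
translate of σ, so by translation invariance the energy does not change. Flipping `0` alone
creates a second isolated `+` spin, which breaks four bonds: the energy rises by `4J - h > 0`.
-/

open Finset

section SpinSums

variable {G R : Type*} [Fintype G] [CommRing R] {f g : G → R} {z : G}

theorem sum_sub_sum_of_neg_at (hz : g z = -f z) (hg : ∀ y ≠ z, g y = f y) :
    ∑ x, g x - ∑ x, f x = -2 * f z := by
  rw [← Finset.sum_sub_distrib, Fintype.sum_eq_single z fun y hy => by rw [hg y hy, sub_self],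
    hz]
  ring

theorem sum_mul_shift_sub_sum_of_neg_at [AddGroup G] {e : G} (he : e ≠ 0) (hz : g z = -f z)
    (hg : ∀ y ≠ z, g y = f y) :
    ∑ x, g x * g (x + e) - ∑ x, f x * f (x + e) = -2 * f z * (f (z + e) + f (z - e)) := by
  have hze : z + e ≠ z := fun h => he (by simpa using h)
  have hez : z - e ≠ z := fun h => he (by simpa using h)
  rw [← Finset.sum_sub_distrib, Fintype.sum_eq_add z (z - e) hez.symm, sub_add_cancel, hz,
    hg _ hze, hg _ hez]
  · ring
  rintro x ⟨hxz, hxe⟩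
  have hxe' : x + e ≠ z := fun h => hxe (eq_sub_of_add_eq h)
  rw [hg x hxz, hg _ hxe', sub_self]

end SpinSums

theorem spin_not (b : Bool) : spin (!b) = -spin b := by
  cases b <;> rfl

instance fact_one_lt_two_mul (L : ℕ) [NeZero L] : Fact (1 < 2 * L) :=
  ⟨by have := NeZero.ne L; omega⟩

section Torus

variable {L M : ℕ}

def realSpin (σ : Config L M) (x : Site L M) : ℝ := spin (σ x)

def plusAt (b : Site L M) : Config L M := fun x => decide (x = b)

theorem realSpin_plusAt_of_ne {b y : Site L M} (hy : y ≠ b) : realSpin (plusAt b) y = -1 := by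
  simp [realSpin, plusAt, spin, hy]

theorem flipC_plusAt_pair {a b : Site L M} (hab : a ≠ b) : flipC (plusAt b) {a, b} = plusAt a := by
  funext x
  by_cases hxa : x = a
  · simp [flipC, plusAt, hxa, hab]
  · by_cases hxb : x = b <;> simp [flipC, plusAt, hxa, hxb, hab.symm]

theorem plusAt_eq_comp_add_right (a b : Site L M) :
    plusAt a = fun x => plusAt b (x + (b - a)) := by
  funext x
  simp only [plusAt, add_sub_left_comm x b a, add_eq_left, sub_eq_zero]

variable [NeZero L] [NeZero M]

theorem ham_eq_realSpin (J h : ℝ) (σ : Config L M) :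
    ham J h σ = -(J/2) * (∑ x, realSpin σ x * realSpin σ (x + (1,0)) +
      ∑ x, realSpin σ x * realSpin σ (x + (0,1))) - (h/2) * ∑ x, realSpin σ x := by
  simp only [ham, realSpin, Int.cast_add, Int.cast_mul, Finset.sum_add_distrib]

theorem ham_comp_add_right (J h : ℝ) (σ : Config L M) (c : Site L M) :
    ham J h (fun x => σ (x + c)) = ham J h σ := by
  have shift (f : Site L M → ℝ) : ∑ x, f (x + c) = ∑ x, f x := Equiv.sum_comp (Equiv.addRight c) f
  have hs : realSpin (fun x => σ (x + c)) = fun x => realSpin σ (x + c) := rfl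
  simp only [ham_eq_realSpin, hs, add_right_comm _ _ c]
  rw [shift fun x => realSpin σ x * realSpin σ (x + (1,0)),
    shift fun x => realSpin σ x * realSpin σ (x + (0,1)), shift (realSpin σ)]

theorem ham_plusAt_eq (J h : ℝ) (a b : Site L M) : ham J h (plusAt a) = ham J h (plusAt b) := by
  rw [plusAt_eq_comp_add_right a b, ham_comp_add_right]

theorem ham_flipC_singleton_sub (J h : ℝ) (σ : Config L M) (z : Site L M) :
    ham J h (flipC σ {z}) - ham J h σ = realSpin σ z * (J * (realSpin σ (z + (1,0)) +
      realSpin σ (z - (1,0)) + realSpin σ (z + (0,1)) + realSpin σ (z - (0,1))) + h) := by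
  have hz : realSpin (flipC σ {z}) z = -realSpin σ z := by
    simp [realSpin, flipC, spin_not]
  have hoff : ∀ y ≠ z, realSpin (flipC σ {z}) y = realSpin σ y := by
    intro y hy
    simp [realSpin, flipC, hy]
  have e₁ : ((1,0) : Site L M) ≠ 0 := by simp [Prod.ext_iff]
  have e₂ : ((0,1) : Site L M) ≠ 0 := by simp [Prod.ext_iff]
  have hbond₁ := sum_mul_shift_sub_sum_of_neg_at e₁ hz hoff
  have hbond₂ := sum_mul_shift_sub_sum_of_neg_at e₂ hz hoff
  have hfield := sum_sub_sum_of_neg_at hz hoff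
  rw [ham_eq_realSpin, ham_eq_realSpin]
  linear_combination (-(J/2)) * (hbond₁ + hbond₂) - (h/2) * hfield

end Torus

theorem parallel_move_beats_single_flips_general {L M : ℕ} [NeZero L] [NeZero M]
    (J h : ℝ) (hh : 0 < h) (hJ : 2*h < J) :
    ∃ (σ : Config L M) (I : Finset (Site L M)),
      (I ⊆ evens L M ∨ I ⊆ odds L M) ∧
      ham J h (flipC σ I) ≤ ham J h σ ∧
      ∃ x ∈ I, 0 < ham J h (flipC σ {x}) - ham J h σ := by
  set b : Site L M := (1, 1)
  have hb : (0 : Site L M) ≠ b := by simp [b, Prod.ext_iff]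
  refine ⟨plusAt b, {0, b}, Or.inl ?_, ?_, 0, mem_insert_self _ _, ?_⟩
  · intro x hx
    rcases Finset.mem_insert.1 hx with rfl | hx
    · simp [evens]
    · simp [Finset.mem_singleton.1 hx, b, evens, ZMod.val_one]
  · rw [flipC_plusAt_pair hb, ham_plusAt_eq J h 0 b]
  · rw [ham_flipC_singleton_sub, realSpin_plusAt_of_ne hb]
    repeat rw [realSpin_plusAt_of_ne (by simp [b, Prod.ext_iff])]
    linarith

/-- a parallel move can be energetically non-increasing even though one of
its component single-spin flips strictly raises the energy. -/
theorem parallel_move_beats_single_flips {L M : ℕ} [NeZero L] [NeZero M]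
    (J h : ℝ) (hh : 0 < h) (hJ : 2*h < J) (hL : 2 ≤ L) (hM : 2 ≤ M) :
    ∃ (σ : Config L M) (I : Finset (Site L M)),
      (I ⊆ evens L M ∨ I ⊆ odds L M) ∧
      ham J h (flipC σ I) ≤ ham J h σ ∧
      ∃ x ∈ I, 0 < ham J h (flipC σ {x}) - ham J h σ :=
  parallel_move_beats_single_flips_general J h hh hJ
end

section
/- For the critical configuration 𝒫, consisting of all minus spins except for an ℓ*×(ℓ*−1) rectangle of pluses together with a single unit protuberance attached to one of the longer sides, the energy gap satisfies H(𝒫) − H(−1) = 4Jℓ* − h((ℓ*)² − ℓ* + 1), where −1 is the all-minus configuration. -/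
open Finset

def rectConf (L M : ℕ) [NeZero L] [NeZero M] (a b : ℕ) : Config L M :=
  fun x => decide (∃ i < a, ∃ j < b, x = ((i : ZMod (2*L)), ((j : ZMod (2*M)))))

def allMinus (L M : ℕ) : Config L M := fun _ => false
noncomputable def lstar (J h : ℝ) : ℕ := ⌊2*J/h⌋₊ + 1

/-!
Expanding `spin b = 2[b] - 1`, the energy gap of any configuration is
`-2J·(plus–plus bonds) + (4J - h)·(plus sites)`, i.e. `J·perimeter - h·area`.
The critical droplet of side `ℓ` has `ℓ(ℓ - 1) + 1` plus sites, `(ℓ - 1)²` horizontal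
bonds and `ℓ(ℓ - 2) + 1 = (ℓ - 1)²` vertical ones, whence `4Jℓ - h(ℓ² - ℓ + 1)`.
As the droplet stays off the last row and column of the torus, its bonds can be counted
in `ℕ × ℕ`.
-/

section SpinSums

variable {G : Type*} [Fintype G] (σ : G → Bool)

lemma spin_eq_two_mul_sub_one (b : Bool) : spin b = 2 * (if b then 1 else 0) - 1 := by
  cases b <;> rfl

lemma spin_mul_spin (a b : Bool) :
    spin a * spin b
      = 4 * (if a ∧ b then 1 else 0) - 2 * (if a then 1 else 0) - 2 * (if b then 1 else 0)
        + 1 := by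
  cases a <;> cases b <;> rfl

lemma sum_spin : ∑ x, spin (σ x) = 2 * #{x | σ x} - Fintype.card G := by
  simp only [spin_eq_two_mul_sub_one, sum_sub_distrib, ← mul_sum, sum_boole, sum_const,
    card_univ, nsmul_one]

lemma sum_spin_mul_spin_add [AddGroup G] (e : G) :
    ∑ x, spin (σ x) * spin (σ (x + e))
      = 4 * #{x | σ x ∧ σ (x + e)} - 4 * #{x | σ x} + Fintype.card G := by
  have hshift : ∑ x, (if σ (x + e) then (1 : ℤ) else 0) = ∑ x, if σ x then 1 else 0 :=
    Equiv.sum_comp (Equiv.addRight e) fun x => if σ x then (1 : ℤ) else 0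
  simp only [spin_mul_spin, sum_add_distrib, sum_sub_distrib, ← mul_sum, hshift, sum_boole,
    sum_const, card_univ, nsmul_one]
  ring

end SpinSums

section Energy

variable {L M : ℕ} [NeZero L] [NeZero M]

lemma ham_sub_ham_allMinus (J h : ℝ) (σ : Config L M) :
    ham J h σ - ham J h (allMinus L M)
      = -2 * J * (#{x | σ x ∧ σ (x + (1, 0))} + #{x | σ x ∧ σ (x + (0, 1))} : ℕ)
        + (4 * J - h) * #{x | σ x} := by
  have hminus : ∀ x, spin (allMinus L M x) = -1 := fun _ => rfl
  simp only [ham, ← Int.cast_sum, sum_add_distrib, sum_spin_mul_spin_add, sum_spin, hminus,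
    sum_const, card_univ, nsmul_eq_mul]
  push_cast
  ring

end Energy

lemma ZMod.val_add_one_of_lt {n : ℕ} {a : ZMod n} (h : a.val + 1 < n) :
    (a + 1).val = a.val + 1 := by
  have hone : (1 : ZMod n).val = 1 := ZMod.val_one'' (by omega)
  rw [ZMod.val_add_of_lt (by rwa [hone]), hone]

def hBonds (S : Finset (ℕ × ℕ)) : Finset (ℕ × ℕ) := {q ∈ S | (q.1 + 1, q.2) ∈ S}

def vBonds (S : Finset (ℕ × ℕ)) : Finset (ℕ × ℕ) := {q ∈ S | (q.1, q.2 + 1) ∈ S}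

section Coordinates

variable {L M : ℕ}

def coords (x : Site L M) : ℕ × ℕ := (x.1.val, x.2.val)

lemma coords_natCast {q : ℕ × ℕ} (hq : q.1 < 2 * L ∧ q.2 < 2 * M) :
    coords (((q.1 : ZMod (2 * L)), (q.2 : ZMod (2 * M))) : Site L M) = q :=
  Prod.ext (ZMod.val_cast_of_lt hq.1) (ZMod.val_cast_of_lt hq.2)

lemma coords_add_right {x : Site L M} (hx : x.1.val + 1 < 2 * L) :
    coords (x + (1, 0)) = (x.1.val + 1, x.2.val) :=
  Prod.ext (ZMod.val_add_one_of_lt hx) (congrArg ZMod.val (add_zero x.2))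

lemma coords_add_up {x : Site L M} (hx : x.2.val + 1 < 2 * M) :
    coords (x + (0, 1)) = (x.1.val, x.2.val + 1) :=
  Prod.ext (congrArg ZMod.val (add_zero x.1)) (ZMod.val_add_one_of_lt hx)

variable [NeZero L] [NeZero M]

lemma coords_injective : Function.Injective (coords : Site L M → ℕ × ℕ) := fun _ _ hxy =>
  Prod.ext (ZMod.val_injective _ (congrArg Prod.fst hxy))
    (ZMod.val_injective _ (congrArg Prod.snd hxy))

lemma card_filter_eq_card_of_coords (P : Site L M → Prop) [DecidablePred P]
    (T : Finset (ℕ × ℕ)) (hT : ∀ q ∈ T, q.1 < 2 * L ∧ q.2 < 2 * M)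
    (hP : ∀ x, P x ↔ coords x ∈ T) :
    #{x | P x} = #T := by
  rw [← card_image_of_injective _ coords_injective]
  congr 1
  ext q
  simp only [mem_image, mem_filter, mem_univ, true_and, hP]
  exact ⟨by rintro ⟨x, hx, rfl⟩; exact hx, fun hq => ⟨_, by rwa [coords_natCast (hT q hq)],
    coords_natCast (hT q hq)⟩⟩

variable {σ : Config L M} {S : Finset (ℕ × ℕ)}

/-- `hS` keeps `S` off the last row and column, so that no bond of `S` wraps around the torus. -/
lemma ham_sub_ham_allMinus_of_coords (J h : ℝ) (hσ : ∀ x, σ x ↔ coords x ∈ S)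
    (hS : ∀ q ∈ S, q.1 + 1 < 2 * L ∧ q.2 + 1 < 2 * M) :
    ham J h σ - ham J h (allMinus L M)
      = -2 * J * (#(hBonds S) + #(vBonds S) : ℕ) + (4 * J - h) * #S := by
  have hfit : ∀ T ⊆ S, ∀ q ∈ T, q.1 < 2 * L ∧ q.2 < 2 * M := fun T hT q hq =>
    have := hS q (hT hq); ⟨by omega, by omega⟩
  have hright : ∀ x, (σ x ∧ σ (x + (1, 0))) ↔ coords x ∈ hBonds S := fun x => by
    rw [hσ, hσ, hBonds, mem_filter]
    exact and_congr_right fun hx => by rw [coords_add_right (hS _ hx).1]; rfl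
  have hup : ∀ x, (σ x ∧ σ (x + (0, 1))) ↔ coords x ∈ vBonds S := fun x => by
    rw [hσ, hσ, vBonds, mem_filter]
    exact and_congr_right fun hx => by rw [coords_add_up (hS _ hx).2]; rfl
  rw [ham_sub_ham_allMinus, card_filter_eq_card_of_coords _ _ (hfit _ subset_rfl) hσ,
    card_filter_eq_card_of_coords _ (hBonds S) (hfit _ (filter_subset _ _)) hright,
    card_filter_eq_card_of_coords _ (vBonds S) (hfit _ (filter_subset _ _)) hup]

end Coordinates

def protrudedRect (a b : ℕ) : Finset (ℕ × ℕ) := range a ×ˢ range b ∪ {(0, b)}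

lemma card_protrudedRect (a b : ℕ) : #(protrudedRect a b) = a * b + 1 := by
  rw [protrudedRect, card_union_of_disjoint (by simp), card_product, card_range, card_range,
    card_singleton]

lemma hBonds_protrudedRect (a b : ℕ) :
    hBonds (protrudedRect a b) = range (a - 1) ×ˢ range b := by
  ext ⟨i, j⟩
  simp only [hBonds, protrudedRect, mem_filter, mem_union, mem_product, mem_range,
    mem_singleton, Prod.mk.injEq]
  omega

lemma vBonds_protrudedRect {a b : ℕ} (ha : 1 ≤ a) (hb : 1 ≤ b) :
    vBonds (protrudedRect a b) = protrudedRect a (b - 1) := by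
  ext ⟨i, j⟩
  simp only [vBonds, protrudedRect, mem_filter, mem_union, mem_product, mem_range,
    mem_singleton, Prod.mk.injEq]
  omega

lemma vBonds_protrudedRect_zero (a : ℕ) : vBonds (protrudedRect a 0) = ∅ := by
  ext ⟨i, j⟩
  simp [vBonds, protrudedRect]

lemma card_hBonds_add_card_vBonds_protrudedRect {n : ℕ} (hn : 1 ≤ n) :
    #(hBonds (protrudedRect n (n - 1))) + #(vBonds (protrudedRect n (n - 1)))
      = 2 * (n - 1) ^ 2 := by
  rw [hBonds_protrudedRect, card_product, card_range]
  obtain rfl | hn2 := hn.eq_or_lt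
  · rw [Nat.sub_self, vBonds_protrudedRect_zero]; rfl
  · rw [vBonds_protrudedRect hn (by omega), card_protrudedRect]
    obtain ⟨m, rfl⟩ : ∃ m, n = m + 2 := ⟨n - 2, by omega⟩
    simp only [show m + 2 - 1 = m + 1 by omega, Nat.add_sub_cancel]
    ring

section Droplet

variable {L M : ℕ} [NeZero L] [NeZero M]

lemma rectConf_eq_true_iff {a b : ℕ} (ha : a ≤ 2 * L) (hb : b ≤ 2 * M) (x : Site L M) :
    rectConf L M a b x ↔ coords x ∈ range a ×ˢ range b := by
  simp only [rectConf, decide_eq_true_eq, mem_product, mem_range, coords]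
  constructor
  · rintro ⟨i, hi, j, hj, rfl⟩
    rw [ZMod.val_cast_of_lt (by omega), ZMod.val_cast_of_lt (by omega)]
    exact ⟨hi, hj⟩
  · rintro ⟨hi, hj⟩
    exact ⟨_, hi, _, hj, Prod.ext (ZMod.natCast_zmod_val x.1).symm
      (ZMod.natCast_zmod_val x.2).symm⟩

lemma flipC_rectConf_eq_true_iff {a b : ℕ} (ha : a ≤ 2 * L) (hb : b < 2 * M) (x : Site L M) :
    flipC (rectConf L M a b) {((0 : ZMod (2 * L)), (b : ZMod (2 * M)))} x
      ↔ coords x ∈ protrudedRect a b := by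
  have hcorner : coords (((0 : ZMod (2 * L)), (b : ZMod (2 * M))) : Site L M) = (0, b) :=
    Prod.ext ZMod.val_zero (ZMod.val_cast_of_lt hb)
  have hcorner_minus : ¬ rectConf L M a b ((0 : ZMod (2 * L)), (b : ZMod (2 * M))) := by
    rw [rectConf_eq_true_iff ha hb.le, hcorner]; simp
  simp only [flipC, mem_singleton, protrudedRect, mem_union, ← rectConf_eq_true_iff ha hb.le]
  by_cases hx : x = ((0 : ZMod (2 * L)), (b : ZMod (2 * M)))
  · subst hx
    simp [hcorner_minus, hcorner]
  · simp [hx, ← hcorner, coords_injective.eq_iff]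

end Droplet

lemma ham_criticalDroplet_sub_ham_allMinus {L M : ℕ} [NeZero L] [NeZero M] (J h : ℝ) {n : ℕ}
    (hn : 1 ≤ n) (hL : n + 1 ≤ 2 * L) (hM : n + 1 ≤ 2 * M) :
    ham J h (flipC (rectConf L M n (n - 1)) {((0 : ZMod (2 * L)), ((n - 1 : ℕ) : ZMod (2 * M)))})
        - ham J h (allMinus L M)
      = 4 * J * n - h * (n ^ 2 - n + 1) := by
  have hfits : ∀ q ∈ protrudedRect n (n - 1), q.1 + 1 < 2 * L ∧ q.2 + 1 < 2 * M := by
    intro q hq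
    simp only [protrudedRect, mem_union, mem_product, mem_range, mem_singleton, Prod.ext_iff] at hq
    omega
  rw [ham_sub_ham_allMinus_of_coords J h (flipC_rectConf_eq_true_iff (by omega) (by omega)) hfits,
    card_hBonds_add_card_vBonds_protrudedRect hn, card_protrudedRect]
  push_cast [Nat.cast_sub hn]
  ring

lemma one_le_lstar (J h : ℝ) : 1 ≤ lstar J h := Nat.le_add_left 1 _

theorem critical_droplet_energy_general {L M : ℕ} [NeZero L] [NeZero M]
    (J h : ℝ)
    (hL : lstar J h + 2 ≤ 2*L) (hM : lstar J h + 2 ≤ 2*M) :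
    ham J h (flipC (rectConf L M (lstar J h) (lstar J h - 1))
        {((0 : ZMod (2*L)), ((lstar J h - 1 : ℕ) : ZMod (2*M)))})
      - ham J h (allMinus L M)
      = 4*J*(lstar J h : ℝ) - h*((lstar J h : ℝ)^2 - (lstar J h : ℝ) + 1) :=
  ham_criticalDroplet_sub_ham_allMinus J h (one_le_lstar J h) (by omega) (by omega)

/-- energy of the critical droplet (an ℓ*×(ℓ*−1) rectangle of pluses with a
unit protuberance on a longest side) relative to the all-minus configuration. -/
theorem critical_droplet_energy {L M : ℕ} [NeZero L] [NeZero M]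
    (J h : ℝ) (hJ : 0 < J) (hh : 0 < h)
    (hL : lstar J h + 2 ≤ 2*L) (hM : lstar J h + 2 ≤ 2*M) :
    ham J h (flipC (rectConf L M (lstar J h) (lstar J h - 1))
        {((0 : ZMod (2*L)), ((lstar J h - 1 : ℕ) : ZMod (2*M)))})
      - ham J h (allMinus L M)
      = 4*J*(lstar J h : ℝ) - h*((lstar J h : ℝ)^2 - (lstar J h : ℝ) + 1) :=
  critical_droplet_energy_general J h hL hM
end

section
/- The two-step transition kernel P(ξ,η) = Σ_ζ p_e(ξ,ζ) p_o(ζ,η) of the alternate dynamics is irreducible: for any two configurations ξ, η there is n with Pⁿ(ξ,η) > 0; consequently the Gibbs measure is its unique invariant measure. -/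
/-!
Each half-step is a Metropolis kernel on one sublattice and satisfies detailed balance with respect
to the Gibbs measure, so the Gibbs measure is invariant under their product. Since each sublattice
has at least two sites, the first full step can flip a set after which the remaining discrepancy
still meets both sublattices; the second step removes it. So the square of the two-step matrix is
positive, and for an irreducible nonnegative matrix every invariant vector is a multiple of a
positive invariant one `ν`, because the maximal ratio `π / ν` propagates to every state.
-/

open Finset

noncomputable def gibbs {L M : ℕ} [NeZero L] [NeZero M] (J h β : ℝ) (σ : Config L M) : ℝ :=
  Real.exp (-β * ham J h σ) / ∑ η : Config L M, Real.exp (-β * ham J h η)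

def diffSet {L M : ℕ} [NeZero L] [NeZero M] (ξ η : Config L M) : Finset (Site L M) :=
  univ.filter fun x => ξ x ≠ η x

noncomputable def offDiag {L M : ℕ} [NeZero L] [NeZero M] (J h β : ℝ)
    (μ : Finset (Site L M) → ℝ) (S : Finset (Site L M)) (ξ η : Config L M) : ℝ :=
  if (diffSet ξ η).Nonempty ∧ diffSet ξ η ⊆ S then
    μ (diffSet ξ η) * Real.exp (-β * max (ham J h η - ham J h ξ) 0)
  else 0

noncomputable def kernel {L M : ℕ} [NeZero L] [NeZero M] (J h β : ℝ)
    (μ : Finset (Site L M) → ℝ) (S : Finset (Site L M)) (ξ η : Config L M) : ℝ :=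
  if ξ = η then 1 - ∑ ζ ∈ univ.erase ξ, offDiag J h β μ S ξ ζ
  else offDiag J h β μ S ξ η
/-- One full step of the alternate dynamics: an even-sublattice update followed by an
odd-sublattice update. -/
noncomputable def stepK {L M : ℕ} [NeZero L] [NeZero M] (J h β : ℝ)
    (μe μo : Finset (Site L M) → ℝ) (ξ η : Config L M) : ℝ :=
  ∑ ζ : Config L M, kernel J h β μe (evens L M) ξ ζ * kernel J h β μo (odds L M) ζ η

/-- n-fold iterate of the two-step kernel. -/
noncomputable def iterK {L M : ℕ} [NeZero L] [NeZero M] (J h β : ℝ)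
    (μe μo : Finset (Site L M) → ℝ) : ℕ → Config L M → Config L M → ℝ
  | 0, ξ, η => if ξ = η then 1 else 0
  | n+1, ξ, η => ∑ ζ : Config L M, iterK J h β μe μo n ξ ζ * stepK J h β μe μo ζ η

open scoped symmDiff

namespace Matrix

variable {ι : Type*} [Fintype ι]

theorem vecMul_eq_self_of_detailed_balance {R : Type*} [CommSemiring R] {P : Matrix ι ι R}
    {v : ι → R} (hP : ∀ i, ∑ j, P i j = 1) (hv : ∀ i j, v i * P i j = v j * P j i) :
    v ᵥ* P = v := by
  ext j
  simp only [vecMul, dotProduct, hv _ j, ← mul_sum, hP, mul_one]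

theorem eq_zero_of_vecMul_apply_eq_zero {Q : Matrix ι ι ℝ} {v : ι → ℝ} (hQ : ∀ i j, 0 ≤ Q i j)
    (hv : ∀ i, 0 ≤ v i) {i j : ι} (hvQ : (v ᵥ* Q) j = 0) (hij : 0 < Q i j) : v i = 0 := by
  have hterm := (sum_eq_zero_iff_of_nonneg fun k _ => mul_nonneg (hv k) (hQ k j)).1 hvQ i
    (mem_univ i)
  exact (mul_eq_zero.1 hterm).resolve_right hij.ne'

theorem mul_apply_pos {A B : Matrix ι ι ℝ} (hA : ∀ i j, 0 ≤ A i j) (hB : ∀ i j, 0 ≤ B i j)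
    {i j k : ι} (hik : 0 < A i k) (hkj : 0 < B k j) : 0 < (A * B) i j :=
  lt_of_lt_of_le (mul_pos hik hkj) <| single_le_sum (f := fun l => A i l * B l j)
    (fun l _ => mul_nonneg (hA i l) (hB l j)) (mem_univ k)

variable [DecidableEq ι]

theorem vecMul_pow_eq_self {R : Type*} [Semiring R] {P : Matrix ι ι R} {v : ι → R}
    (hv : v ᵥ* P = v) (n : ℕ) : v ᵥ* P ^ n = v := by
  induction n with
  | zero => rw [pow_zero, vecMul_one]
  | succ n ih => rw [pow_succ, ← vecMul_vecMul, ih, hv]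

theorem IsIrreducible.exists_eq_smul_of_vecMul_eq_self [Nonempty ι] {P : Matrix ι ι ℝ}
    (hP : P.IsIrreducible) {ν π : ι → ℝ} (hν : ∀ i, 0 < ν i) (hνP : ν ᵥ* P = ν)
    (hπP : π ᵥ* P = π) : ∃ c : ℝ, π = c • ν := by
  -- `c • ν - π` is a nonnegative invariant vector vanishing where `π / ν` is maximal.
  obtain ⟨k, -, hk⟩ := exists_max_image univ (fun i => π i / ν i) univ_nonempty
  set c := π k / ν k
  have hle : ∀ i, 0 ≤ c * ν i - π i := fun i =>
    sub_nonneg.2 ((div_le_iff₀ (hν i)).1 (hk i (mem_univ i)))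
  have hinv : ∀ n, (c • ν - π) ᵥ* P ^ n = c • ν - π := fun n => by
    rw [sub_vecMul, smul_vecMul, vecMul_pow_eq_self hνP, vecMul_pow_eq_self hπP]
  have hk0 : c * ν k - π k = 0 := by rw [div_mul_cancel₀ _ (hν k).ne', sub_self]
  refine ⟨c, funext fun i => ?_⟩
  obtain ⟨n, -, hn⟩ := (isIrreducible_iff_exists_pow_pos hP.nonneg).1 hP i k
  have := eq_zero_of_vecMul_apply_eq_zero (v := c • ν - π) (pow_apply_nonneg hP.nonneg n) hle
    (by rw [hinv]; exact hk0) hn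
  simp only [Pi.sub_apply, Pi.smul_apply, smul_eq_mul] at this ⊢
  linarith

theorem IsIrreducible.eq_of_vecMul_eq_self {P : Matrix ι ι ℝ} (hP : P.IsIrreducible)
    {ν π : ι → ℝ} (hν : ∀ i, 0 < ν i) (hνP : ν ᵥ* P = ν) (hπP : π ᵥ* P = π)
    (hsum : ∑ i, π i = ∑ i, ν i) : π = ν := by
  cases isEmpty_or_nonempty ι
  · exact funext isEmptyElim
  obtain ⟨c, rfl⟩ := hP.exists_eq_smul_of_vecMul_eq_self hν hνP hπP
  have hpos : 0 < ∑ i, ν i := sum_pos (fun i _ => hν i) univ_nonempty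
  have hc : c = 1 := by
    simp only [Pi.smul_apply, smul_eq_mul, ← mul_sum] at hsum
    exact (mul_eq_right₀ hpos.ne').1 hsum
  rw [hc, one_smul]

end Matrix

open Matrix

theorem Finset.exists_nonempty_subset_ne {α : Type*} {S : Finset α} (hS : 1 < S.card)
    (D : Finset α) : ∃ E ⊆ S, E.Nonempty ∧ E ≠ D := by
  obtain ⟨a, ha, b, hb, hab⟩ := one_lt_card.1 hS
  by_cases hD : D = {a}
  · exact ⟨{b}, singleton_subset_iff.2 hb, singleton_nonempty b, by simpa [hD] using hab.symm⟩
  · exact ⟨{a}, singleton_subset_iff.2 ha, singleton_nonempty a, Ne.symm hD⟩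

theorem add_max_sub_zero {α : Type*} [AddCommGroup α] [LinearOrder α] [IsOrderedAddMonoid α]
    (a b : α) : a + max (b - a) 0 = max a b := by
  rw [← max_add_add_left, add_sub_cancel, add_zero, max_comm]

section Ising

variable {L M : ℕ} [NeZero L] [NeZero M]

section Configurations

@[simp] theorem mem_diffSet {ξ η : Config L M} {x : Site L M} : x ∈ diffSet ξ η ↔ ξ x ≠ η x := by
  simp [diffSet]

theorem diffSet_comm (ξ η : Config L M) : diffSet ξ η = diffSet η ξ := by
  ext x; simp [ne_comm]

@[simp] theorem diffSet_self (ξ : Config L M) : diffSet ξ ξ = ∅ := by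
  ext x; simp

@[simp] theorem diffSet_flipC (ξ : Config L M) (I : Finset (Site L M)) :
    diffSet ξ (flipC ξ I) = I := by
  ext x; by_cases hx : x ∈ I <;> simp [flipC, hx]

theorem flipC_diffSet (ξ η : Config L M) : flipC ξ (diffSet ξ η) = η := by
  funext x; by_cases hx : ξ x = η x <;> cases hξ : ξ x <;> cases hη : η x <;> simp_all [flipC]

theorem diffSet_flipC_left (σ τ : Config L M) (A : Finset (Site L M)) :
    diffSet (flipC σ A) τ = A ∆ diffSet σ τ := by
  ext x; by_cases hx : x ∈ A <;> simp [flipC, hx, mem_symmDiff]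

def diffSetEquiv (ξ : Config L M) : Config L M ≃ Finset (Site L M) where
  toFun := diffSet ξ
  invFun := flipC ξ
  left_inv := flipC_diffSet ξ
  right_inv := diffSet_flipC ξ

end Configurations

section Sublattices

variable (L M)

theorem evens_disjoint_odds : Disjoint (evens L M) (odds L M) :=
  disjoint_filter_filter_not _ _ _

theorem evens_union_odds : evens L M ∪ odds L M = univ :=
  filter_union_filter_not_eq _ _

theorem inter_evens_symmDiff_inter_odds (D : Finset (Site L M)) :
    (D ∩ evens L M) ∆ (D ∩ odds L M) = D := by
  rw [← inf_eq_inter, ← inf_eq_inter, ← inf_symmDiff_distrib_left,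
    (evens_disjoint_odds L M).symmDiff_eq_sup, sup_eq_union, evens_union_odds, inf_eq_inter,
    inter_univ]

theorem one_lt_card_evens : 1 < (evens L M).card := by
  have : Fact (1 < 2 * L) := ⟨by have := NeZero.pos L; omega⟩
  have : Fact (1 < 2 * M) := ⟨by have := NeZero.pos M; omega⟩
  refine one_lt_card.2 ⟨(0, 0), by simp [evens], (1, 1), by simp [evens, ZMod.val_one], ?_⟩
  simp

theorem one_lt_card_odds : 1 < (odds L M).card := by
  have : Fact (1 < 2 * L) := ⟨by have := NeZero.pos L; omega⟩
  have : Fact (1 < 2 * M) := ⟨by have := NeZero.pos M; omega⟩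
  refine one_lt_card.2 ⟨(0, 1), by simp [odds, ZMod.val_one], (1, 0), by simp [odds, ZMod.val_one],
    ?_⟩
  simp

end Sublattices

section MetropolisKernel

variable (J h β : ℝ) {μ : Finset (Site L M) → ℝ} {S : Finset (Site L M)}

@[simp] theorem offDiag_self (ξ : Config L M) : offDiag J h β μ S ξ ξ = 0 := by
  simp [_root_.offDiag]

theorem offDiag_nonneg (hμ : ∀ I, I.Nonempty → I ⊆ S → 0 ≤ μ I) (ξ η : Config L M) :
    0 ≤ offDiag J h β μ S ξ η := by
  unfold _root_.offDiag
  split_ifs with hc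
  · exact mul_nonneg (hμ _ hc.1 hc.2) (Real.exp_pos _).le
  · exact le_rfl

theorem offDiag_le (hβ : 0 ≤ β) (hμ : ∀ I, I.Nonempty → I ⊆ S → 0 ≤ μ I)
    (ξ η : Config L M) :
    offDiag J h β μ S ξ η ≤
      if (diffSet ξ η).Nonempty ∧ diffSet ξ η ⊆ S then μ (diffSet ξ η) else 0 := by
  unfold _root_.offDiag
  split_ifs with hc
  · refine mul_le_of_le_one_right (hμ _ hc.1 hc.2) (Real.exp_le_one_iff.2 ?_)
    exact mul_nonpos_of_nonpos_of_nonneg (neg_nonpos.2 hβ) (le_max_right _ _)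
  · exact le_rfl

theorem sum_offDiag_le_one (hβ : 0 ≤ β) (hμ : ∀ I, I.Nonempty → I ⊆ S → 0 ≤ μ I)
    (hsum : ∑ I ∈ S.powerset.filter (fun I => I.Nonempty), μ I = 1) (ξ : Config L M) :
    ∑ ζ ∈ univ.erase ξ, offDiag J h β μ S ξ ζ ≤ 1 := by
  calc ∑ ζ ∈ univ.erase ξ, offDiag J h β μ S ξ ζ
      = ∑ ζ, offDiag J h β μ S ξ ζ := sum_erase _ (offDiag_self J h β ξ)
    _ ≤ ∑ ζ, if (diffSet ξ ζ).Nonempty ∧ diffSet ξ ζ ⊆ S then μ (diffSet ξ ζ) else 0 :=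
        sum_le_sum fun ζ _ => offDiag_le J h β hβ hμ ξ ζ
    _ = ∑ I, if I.Nonempty ∧ I ⊆ S then μ I else 0 :=
        (diffSetEquiv ξ).sum_comp fun I => if I.Nonempty ∧ I ⊆ S then μ I else 0
    _ = 1 := by
        rw [← sum_filter, ← hsum]
        congr 1
        ext I
        simp [and_comm]

theorem kernel_pos (hμ : ∀ I, I.Nonempty → I ⊆ S → 0 < μ I) {ξ η : Config L M}
    (hne : (diffSet ξ η).Nonempty) (hsub : diffSet ξ η ⊆ S) : 0 < kernel J h β μ S ξ η := by
  have hξη : ξ ≠ η := by rintro rfl; simp at hne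
  rw [kernel, if_neg hξη, _root_.offDiag, if_pos ⟨hne, hsub⟩]
  exact mul_pos (hμ _ hne hsub) (Real.exp_pos _)

theorem sum_kernel (ξ : Config L M) : ∑ η, kernel J h β μ S ξ η = 1 := by
  rw [← add_sum_erase _ _ (mem_univ ξ), kernel, if_pos rfl, sub_add_eq_add_sub, add_sub_assoc,
    add_eq_left, sub_eq_zero]
  exact sum_congr rfl fun _ hη => if_neg (ne_of_mem_erase hη).symm

theorem kernel_mem_rowStochastic (hβ : 0 ≤ β) (hμ : ∀ I, I.Nonempty → I ⊆ S → 0 ≤ μ I)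
    (hsum : ∑ I ∈ S.powerset.filter (fun I => I.Nonempty), μ I = 1) :
    of (kernel J h β μ S) ∈ rowStochastic ℝ (Config L M) := by
  refine mem_rowStochastic_iff_sum.2 ⟨fun ξ η => ?_, sum_kernel J h β⟩
  rw [of_apply, kernel]
  split_ifs
  · exact sub_nonneg.2 (sum_offDiag_le_one J h β hβ hμ hsum ξ)
  · exact offDiag_nonneg J h β hμ ξ η

theorem gibbs_pos (σ : Config L M) : 0 < gibbs J h β σ :=
  div_pos (Real.exp_pos _) (sum_pos (fun _ _ => Real.exp_pos _) univ_nonempty)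

theorem sum_gibbs : ∑ σ : Config L M, gibbs J h β σ = 1 := by
  simp only [gibbs]
  rw [← sum_div]
  exact div_self (sum_pos (fun _ _ => Real.exp_pos _) univ_nonempty).ne'

theorem gibbs_mul_kernel_comm (ξ η : Config L M) :
    gibbs J h β ξ * kernel J h β μ S ξ η = gibbs J h β η * kernel J h β μ S η ξ := by
  -- Both sides equal `μ (diffSet ξ η) * exp (-β * max (H ξ) (H η)) / Z`.
  have key : ∀ a b : ℝ, Real.exp (-β * a) * Real.exp (-β * max (b - a) 0) =
      Real.exp (-β * max a b) := fun a b => by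
    rw [← Real.exp_add, ← mul_add, add_max_sub_zero]
  by_cases hξη : ξ = η
  · rw [hξη]
  rw [kernel, if_neg hξη, kernel, if_neg (Ne.symm hξη), _root_.offDiag, _root_.offDiag,
    diffSet_comm η ξ]
  split_ifs
  · simp only [gibbs, div_mul_eq_mul_div, mul_left_comm _ (μ _), key, max_comm]
  · simp

theorem gibbs_vecMul_kernel : gibbs J h β ᵥ* of (kernel J h β μ S) = gibbs J h β :=
  vecMul_eq_self_of_detailed_balance (sum_kernel J h β) (gibbs_mul_kernel_comm J h β)

end MetropolisKernel

section AlternateDynamics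

variable {J h β : ℝ} {μe μo : Finset (Site L M) → ℝ}

theorem of_stepK : of (stepK J h β μe μo) =
    of (kernel J h β μe (evens L M)) * of (kernel J h β μo (odds L M)) := rfl

theorem iterK_eq_pow (n : ℕ) : iterK J h β μe μo n = of (stepK J h β μe μo) ^ n := by
  induction n with
  | zero => funext ξ η; rw [pow_zero, one_apply]; rfl
  | succ n ih => funext ξ η; rw [pow_succ, mul_apply, ← ih]; rfl

theorem gibbs_vecMul_stepK : gibbs J h β ᵥ* of (stepK J h β μe μo) = gibbs J h β := by
  rw [of_stepK, ← vecMul_vecMul, gibbs_vecMul_kernel, gibbs_vecMul_kernel]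

variable (J h) (hβ : 0 ≤ β)
    (hμe : ∀ I, I.Nonempty → I ⊆ evens L M → 0 < μe I)
    (hμesum : ∑ I ∈ (evens L M).powerset.filter (fun I => I.Nonempty), μe I = 1)
    (hμo : ∀ I, I.Nonempty → I ⊆ odds L M → 0 < μo I)
    (hμosum : ∑ I ∈ (odds L M).powerset.filter (fun I => I.Nonempty), μo I = 1)
include hβ hμe hμesum hμo hμosum

theorem stepK_mem_rowStochastic : of (stepK J h β μe μo) ∈ rowStochastic ℝ (Config L M) := by
  rw [of_stepK]
  exact mul_mem (kernel_mem_rowStochastic J h β hβ (fun I h₁ h₂ => (hμe I h₁ h₂).le) hμesum)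
    (kernel_mem_rowStochastic J h β hβ (fun I h₁ h₂ => (hμo I h₁ h₂).le) hμosum)

theorem stepK_pos {σ τ : Config L M} {E O : Finset (Site L M)}
    (hE : E.Nonempty) (hEs : E ⊆ evens L M) (hO : O.Nonempty) (hOs : O ⊆ odds L M)
    (hd : diffSet σ τ = E ∆ O) : 0 < stepK J h β μe μo σ τ := by
  have h₁ : diffSet σ (flipC σ E) = E := diffSet_flipC σ E
  have h₂ : diffSet (flipC σ E) τ = O := by
    rw [diffSet_flipC_left, hd, symmDiff_symmDiff_cancel_left]
  have hKe := kernel_mem_rowStochastic J h β hβ (fun I h₁ h₂ => (hμe I h₁ h₂).le) hμesum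
  have hKo := kernel_mem_rowStochastic J h β hβ (fun I h₁ h₂ => (hμo I h₁ h₂).le) hμosum
  rw [← of_apply (stepK J h β μe μo), of_stepK]
  exact mul_apply_pos (fun _ _ => nonneg_of_mem_rowStochastic hKe)
    (fun _ _ => nonneg_of_mem_rowStochastic hKo)
    (kernel_pos J h β hμe (by rwa [h₁]) (by rwa [h₁]))
    (kernel_pos J h β hμo (by rwa [h₂]) (by rwa [h₂]))

theorem stepK_sq_apply_pos (ξ η : Config L M) : 0 < (of (stepK J h β μe μo) ^ 2) ξ η := by
  set D := diffSet ξ η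
  obtain ⟨E, hEs, hE, hED⟩ := exists_nonempty_subset_ne (one_lt_card_evens L M) (D ∩ evens L M)
  obtain ⟨O, hOs, hO, hOD⟩ := exists_nonempty_subset_ne (one_lt_card_odds L M) (D ∩ odds L M)
  have hd : diffSet (flipC ξ (E ∆ O)) η = (E ∆ (D ∩ evens L M)) ∆ (O ∆ (D ∩ odds L M)) := by
    rw [diffSet_flipC_left, ← symmDiff_symmDiff_symmDiff_comm, inter_evens_symmDiff_inter_odds]
  have hP : ∀ ξ η, 0 ≤ of (stepK J h β μe μo) ξ η := fun _ _ =>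
    nonneg_of_mem_rowStochastic (stepK_mem_rowStochastic J h hβ hμe hμesum hμo hμosum)
  rw [sq]
  exact mul_apply_pos hP hP
    (stepK_pos J h hβ hμe hμesum hμo hμosum hE hEs hO hOs (diffSet_flipC _ _))
    (stepK_pos J h hβ hμe hμesum hμo hμosum (symmDiff_nonempty.2 hED)
      (symmDiff_le_sup.trans (sup_le hEs inter_subset_right)) (symmDiff_nonempty.2 hOD)
      (symmDiff_le_sup.trans (sup_le hOs inter_subset_right)) hd)

theorem stepK_isPrimitive : (of (stepK J h β μe μo)).IsPrimitive :=
  ⟨fun _ _ => nonneg_of_mem_rowStochastic (stepK_mem_rowStochastic J h hβ hμe hμesum hμo hμosum),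
    2, two_pos, stepK_sq_apply_pos J h hβ hμe hμesum hμo hμosum⟩

end AlternateDynamics

end Ising

theorem two_step_kernel_irreducible_unique_invariant_general {L M : ℕ} [NeZero L] [NeZero M]
    (J h β : ℝ) (hβ : 0 < β)
    (μe μo : Finset (Site L M) → ℝ)
    (hμe : ∀ I : Finset (Site L M), I.Nonempty → I ⊆ evens L M → 0 < μe I)
    (hμesum : ∑ I ∈ (evens L M).powerset.filter (fun I => I.Nonempty), μe I = 1)
    (hμo : ∀ I : Finset (Site L M), I.Nonempty → I ⊆ odds L M → 0 < μo I)
    (hμosum : ∑ I ∈ (odds L M).powerset.filter (fun I => I.Nonempty), μo I = 1) :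
    (∀ ξ η : Config L M, ∃ n : ℕ, 0 < iterK J h β μe μo n ξ η) ∧
    (∀ η : Config L M, ∑ ξ : Config L M, gibbs J h β ξ * stepK J h β μe μo ξ η
      = gibbs J h β η) ∧
    (∀ π : Config L M → ℝ, (∀ σ, 0 ≤ π σ) → (∑ σ : Config L M, π σ = 1) →
      (∀ η : Config L M, ∑ ξ : Config L M, π ξ * stepK J h β μe μo ξ η = π η) →
      π = gibbs J h β) := by
  refine ⟨fun ξ η => ⟨2, ?_⟩, fun η => congrFun gibbs_vecMul_stepK η,
    fun π _ hπ hπinv => ?_⟩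
  · rw [iterK_eq_pow]
    exact stepK_sq_apply_pos J h hβ.le hμe hμesum hμo hμosum ξ η
  · exact (stepK_isPrimitive J h hβ.le hμe hμesum hμo hμosum).isIrreducible.eq_of_vecMul_eq_self
      (gibbs_pos J h β) gibbs_vecMul_stepK (funext hπinv) (hπ.trans (sum_gibbs J h β).symm)

/-- the two-step kernel is irreducible and the Gibbs measure is its
unique invariant probability measure. -/
theorem two_step_kernel_irreducible_unique_invariant {L M : ℕ} [NeZero L] [NeZero M]
    (J h β : ℝ) (hJ : 0 < J) (hh : 0 < h) (hβ : 0 < β)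
    (μe μo : Finset (Site L M) → ℝ)
    (hμe : ∀ I : Finset (Site L M), I.Nonempty → I ⊆ evens L M → 0 < μe I)
    (hμe0 : ∀ I : Finset (Site L M), ¬ (I.Nonempty ∧ I ⊆ evens L M) → μe I = 0)
    (hμesum : ∑ I ∈ (evens L M).powerset.filter (fun I => I.Nonempty), μe I = 1)
    (hμo : ∀ I : Finset (Site L M), I.Nonempty → I ⊆ odds L M → 0 < μo I)
    (hμo0 : ∀ I : Finset (Site L M), ¬ (I.Nonempty ∧ I ⊆ odds L M) → μo I = 0)
    (hμosum : ∑ I ∈ (odds L M).powerset.filter (fun I => I.Nonempty), μo I = 1) :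
    (∀ ξ η : Config L M, ∃ n : ℕ, 0 < iterK J h β μe μo n ξ η) ∧
    (∀ η : Config L M, ∑ ξ : Config L M, gibbs J h β ξ * stepK J h β μe μo ξ η
      = gibbs J h β η) ∧
    (∀ π : Config L M → ℝ, (∀ σ, 0 ≤ π σ) → (∑ σ : Config L M, π σ = 1) →
      (∀ η : Config L M, ∑ ξ : Config L M, π ξ * stepK J h β μe μo ξ η = π η) →
      π = gibbs J h β) :=
  two_step_kernel_irreducible_unique_invariant_general J h β hβ μe μo hμe hμesum hμo hμosum
end
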